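/- With notation as in the formal annulus setting over a complete DVR R of unequal characteristic (degree n with p | n, f(y) = v^n·α, dy/y = 𝔡·v^m·β·(dv/v) with 𝔡 ∈ R, β ∈ C^*, m ∈ ℕ): one has ν_p(m) < ν_p(n) whenever m ≠ 0, and m = 0 if and only if (𝔡) = (n) as ideals of R. -/

import Mathlib

noncomputable section

/-- The formal annulus `R[[u,v]]/(uv - c)` of thickness `c` over `R`. -/
abbrev FormalAnnulus (R : Type*) [CommRing R] (c : R) :=
  MvPowerSeries (Fin 2) R ⧸
    Ideal.span {(MvPowerSeries.X 0 * MvPowerSeries.X 1 : MvPowerSeries (Fin 2) R) -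
      MvPowerSeries.C (σ := Fin 2) (R := R) c}

/-!
Let `δ` be the derivation `v d/dv` of the annulus; it lifts to `v∂_v - u∂_u` on `R[[u, v]]`,
which kills `uv - c`. Applying `δ` to `v·dy = 𝔡 v^m β y·dv` and choosing lifts `A, B` of `α, β`
gives `(nA + δA) v^(n+1) ≡ 𝔡 BA v^(n+1+m)` modulo `uv - c`. Since `u^i v^(k+i) = c^i v^k`, the
coefficient of `v^k` of the image of a power series is well defined modulo any power `c^N`.
Reading it off at `k = n+1` and at `k = n+1+m`, where the constant terms of `A` and `BA` are
units, gives `n·unit ≡ 𝔡 c^m t` and `(n+m) t' ≡ 𝔡·unit` modulo high powers of `c`, hence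
`w(𝔡) + m ≤ w(n)` and `w(n+m) ≤ w(𝔡)` for the normalized valuation `w` of `R`. As `w(k) = e·ν_p(k)`
for nonzero naturals `k`, `m ≠ 0` forces `ν_p(n+m) < ν_p(n)`, hence `ν_p(m) < ν_p(n)`, while
`m = 0` iff `w(𝔡) = w(n)`.
-/

theorem Derivation.apply_pow_of_apply_eq_self {R A : Type*} [CommSemiring R] [CommSemiring A]
    [Algebra R A] (D : Derivation R A A) {a : A} (h : D a = a) (n : ℕ) :
    D (a ^ n) = n • a ^ n := by
  rcases n with _ | n
  · simp
  · rw [D.leibniz_pow, h, smul_eq_mul, ← pow_succ, Nat.add_sub_cancel]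

namespace MvPowerSeries

theorem coeff_X_mul_pderiv {σ R : Type*} [CommSemiring R] (i : σ) (f : MvPowerSeries σ R)
    (d : σ →₀ ℕ) : coeff d (X i * pderiv R i f) = d i * coeff d f := by
  classical
  rcases Nat.eq_zero_or_pos (d i) with hd | hd
  · rw [X, coeff_monomial_mul, if_neg (by simp [Finsupp.single_le_iff, hd]), hd, Nat.cast_zero,
      zero_mul]
  · obtain ⟨e, rfl⟩ : ∃ e, d = Finsupp.single i 1 + e :=
      ⟨d - Finsupp.single i 1, (add_tsub_cancel_of_le
        (by simpa [Finsupp.single_le_iff, Nat.one_le_iff_ne_zero] using hd.ne')).symm⟩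
    rw [X, coeff_add_monomial_mul, one_mul, coeff_pderiv, add_comm e]
    simp [add_comm, mul_comm]

variable {R : Type*} [CommRing R]

variable (R) in
/-- With `u = X 0` and `v = X 1`, the lift `v∂_v - u∂_u` of `v d/dv` on the annulus. -/
def annulusEuler : Derivation R (MvPowerSeries (Fin 2) R) (MvPowerSeries (Fin 2) R) :=
  (X 1 : MvPowerSeries (Fin 2) R) • pderiv R 1 - (X 0 : MvPowerSeries (Fin 2) R) • pderiv R 0

theorem coeff_annulusEuler (f : MvPowerSeries (Fin 2) R) (d : Fin 2 →₀ ℕ) :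
    coeff d (annulusEuler R f) = ((d 1 : R) - d 0) * coeff d f := by
  simp only [annulusEuler, Derivation.sub_apply, Derivation.smul_apply, smul_eq_mul, map_sub,
    coeff_X_mul_pderiv, sub_mul]

theorem annulusEuler_X_one : annulusEuler R (X 1) = X 1 := by
  simp [annulusEuler]

theorem annulusEuler_X_zero : annulusEuler R (X 0) = -X 0 := by
  simp [annulusEuler]

theorem annulusEuler_X_zero_mul_X_one_sub_C (c : R) : annulusEuler R (X 0 * X 1 - C c) = 0 := by
  rw [map_sub, Derivation.leibniz, annulusEuler_X_zero, annulusEuler_X_one, c_eq_algebraMap,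
    Derivation.map_algebraMap, smul_eq_mul, smul_eq_mul]
  ring

abbrev annulusIdeal (c : R) : Ideal (MvPowerSeries (Fin 2) R) := Ideal.span {X 0 * X 1 - C c}

theorem annulusEuler_mem_annulusIdeal {c : R} {f : MvPowerSeries (Fin 2) R}
    (hf : f ∈ annulusIdeal c) : annulusEuler R f ∈ annulusIdeal c := by
  obtain ⟨g, rfl⟩ := Ideal.mem_span_singleton'.mp hf
  rw [Derivation.leibniz, annulusEuler_X_zero_mul_X_one_sub_C, smul_zero, zero_add, smul_eq_mul]
  exact Ideal.mul_mem_right _ _ (Ideal.mem_span_singleton_self _)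

def biexp (i j : ℕ) : Fin 2 →₀ ℕ := Finsupp.single 0 i + Finsupp.single 1 j

@[simp] theorem biexp_apply_zero (i j : ℕ) : biexp i j 0 = i := by simp [biexp]

@[simp] theorem biexp_apply_one (i j : ℕ) : biexp i j 1 = j := by simp [biexp]

theorem biexp_add_biexp (i j i' j' : ℕ) :
    biexp i j + biexp i' j' = biexp (i + i') (j + j') := by
  simp only [biexp, Finsupp.single_add]
  abel

theorem X_one_pow_eq_monomial (j : ℕ) :
    (X 1 : MvPowerSeries (Fin 2) R) ^ j = monomial (biexp 0 j) 1 := by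
  simp [biexp, X_pow_eq]

theorem X_zero_mul_X_one_eq_monomial :
    (X 0 * X 1 : MvPowerSeries (Fin 2) R) = monomial (biexp 1 1) 1 := by
  rw [X, X, monomial_mul_monomial, one_mul, biexp]

/-- Since `u^i v^(k+i) = c^i v^k` in `FormalAnnulus R c`, the coefficient of `v^k` in the image of
`f = ∑ a_{ij} u^i v^j` is `∑_i c^i a_{i,k+i}`. Truncating this sum at `N` gives a functional that
is well defined modulo `c^N` (`pow_dvd_annulusCoeff_of_mem`). -/
def annulusCoeff (c : R) (N k : ℕ) : MvPowerSeries (Fin 2) R →ₗ[R] R :=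
  ∑ i ∈ Finset.range N, c ^ i • coeff (biexp i (k + i))

section annulusCoeff

variable {c : R} {N : ℕ}

theorem annulusCoeff_apply (k : ℕ) (f : MvPowerSeries (Fin 2) R) :
    annulusCoeff c N k f = ∑ i ∈ Finset.range N, c ^ i * coeff (biexp i (k + i)) f := by
  simp [annulusCoeff]

theorem annulusCoeff_C_mul (k : ℕ) (r : R) (f : MvPowerSeries (Fin 2) R) :
    annulusCoeff c N k (C r * f) = r * annulusCoeff c N k f := by
  rw [← smul_eq_C_mul, map_smul, smul_eq_mul]

theorem annulusCoeff_mul_X_one_pow (k j : ℕ) (f : MvPowerSeries (Fin 2) R) :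
    annulusCoeff c N (k + j) (f * X 1 ^ j) = annulusCoeff c N k f := by
  simp only [annulusCoeff_apply, X_one_pow_eq_monomial]
  refine Finset.sum_congr rfl fun i _ => ?_
  rw [show biexp i (k + j + i) = biexp i (k + i) + biexp 0 j by
      rw [biexp_add_biexp]; congr 1; ring,
    coeff_add_mul_monomial, mul_one]

theorem pow_dvd_annulusCoeff_mul_X_one_pow (k s : ℕ) (f : MvPowerSeries (Fin 2) R) :
    c ^ s ∣ annulusCoeff c N k (f * X 1 ^ (k + s)) := by
  rw [annulusCoeff_apply]
  refine Finset.dvd_sum fun i _ => ?_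
  rw [X_one_pow_eq_monomial, coeff_mul_monomial]
  split_ifs with h
  · have : s ≤ i := by simpa [Finsupp.le_def, Fin.forall_fin_two] using h
    exact dvd_mul_of_dvd_left (pow_dvd_pow c this) _
  · simp

theorem annulusCoeff_annulusEuler (k : ℕ) (f : MvPowerSeries (Fin 2) R) :
    annulusCoeff c N k (annulusEuler R f) = k * annulusCoeff c N k f := by
  simp only [annulusCoeff_apply, coeff_annulusEuler, biexp_apply_zero, biexp_apply_one,
    Finset.mul_sum]
  refine Finset.sum_congr rfl fun i _ => ?_
  push_cast
  ring

theorem annulusCoeff_C_mul_add_annulusEuler (k : ℕ) (r : R) (f : MvPowerSeries (Fin 2) R) :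
    annulusCoeff c N k (C r * f + annulusEuler R f) = (r + k) * annulusCoeff c N k f := by
  rw [map_add, annulusCoeff_C_mul, annulusCoeff_annulusEuler, add_mul]

theorem annulusCoeff_mul_X_zero_mul_X_one_sub_C (k : ℕ) (f : MvPowerSeries (Fin 2) R) :
    annulusCoeff c (N + 1) k (f * (X 0 * X 1 - C c)) =
      -(c ^ (N + 1) * coeff (biexp N (k + N)) f) := by
  have shift : annulusCoeff c (N + 1) k (f * (X 0 * X 1)) =
      ∑ i ∈ Finset.range N, c ^ (i + 1) * coeff (biexp i (k + i)) f := by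
    rw [annulusCoeff_apply, Finset.sum_range_succ', X_zero_mul_X_one_eq_monomial,
      coeff_mul_monomial, if_neg (by simp [Finsupp.le_def, Fin.forall_fin_two]), mul_zero,
      add_zero]
    refine Finset.sum_congr rfl fun i _ => ?_
    rw [show biexp (i + 1) (k + (i + 1)) = biexp i (k + i) + biexp 1 1 by
        rw [biexp_add_biexp]; rfl,
      coeff_add_mul_monomial, mul_one]
  have scale : annulusCoeff c (N + 1) k (f * C c) =
      ∑ i ∈ Finset.range (N + 1), c ^ (i + 1) * coeff (biexp i (k + i)) f := by
    simp only [annulusCoeff_apply, mul_comm f, coeff_C_mul, pow_succ]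
    exact Finset.sum_congr rfl fun i _ => by ring
  rw [mul_sub, map_sub, shift, scale, Finset.sum_range_succ]
  ring

theorem pow_dvd_annulusCoeff_of_mem (k : ℕ) {f : MvPowerSeries (Fin 2) R}
    (hf : f ∈ annulusIdeal c) : c ^ N ∣ annulusCoeff c N k f := by
  obtain ⟨g, rfl⟩ := Ideal.mem_span_singleton'.mp hf
  rcases N with _ | N
  · simp
  · rw [annulusCoeff_mul_X_zero_mul_X_one_sub_C]
    exact (dvd_mul_right _ _).neg_right

theorem dvd_annulusCoeff_zero_sub_constantCoeff (f : MvPowerSeries (Fin 2) R) :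
    c ∣ annulusCoeff c (N + 1) 0 f - constantCoeff f := by
  rw [annulusCoeff_apply, Finset.sum_range_succ', pow_zero, one_mul, zero_add,
    show biexp 0 0 = 0 by simp [biexp], coeff_zero_eq_constantCoeff_apply, add_sub_cancel_right]
  exact Finset.dvd_sum fun i _ => dvd_mul_of_dvd_left (dvd_pow_self c i.succ_ne_zero) _

theorem isUnit_annulusCoeff_zero [IsLocalRing R] (hc : ¬IsUnit c) (N : ℕ)
    {f : MvPowerSeries (Fin 2) R} (hf : IsUnit (constantCoeff f)) :
    IsUnit (annulusCoeff c (N + 1) 0 f) := by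
  rw [← IsLocalRing.residue_ne_zero_iff_isUnit] at hf ⊢
  have hcm : c ∈ IsLocalRing.maximalIdeal R := (IsLocalRing.mem_maximalIdeal c).mpr hc
  have hsub := (IsLocalRing.residue_eq_zero_iff _).mpr
    (Ideal.mem_of_dvd _ (dvd_annulusCoeff_zero_sub_constantCoeff (N := N) f) hcm)
  rw [map_sub, sub_eq_zero] at hsub
  rwa [hsub]

end annulusCoeff

theorem isUnit_constantCoeff_of_isUnit_mk [IsLocalRing R] {c : R} (hc : ¬IsUnit c)
    {f : MvPowerSeries (Fin 2) R} (hf : IsUnit (Ideal.Quotient.mk (annulusIdeal c) f)) :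
    IsUnit (constantCoeff f) := by
  let ε : FormalAnnulus R c →+* IsLocalRing.ResidueField R :=
    Ideal.Quotient.lift _ ((IsLocalRing.residue R).comp constantCoeff) fun g hg => by
      obtain ⟨h, rfl⟩ := Ideal.mem_span_singleton'.mp hg
      simp [hc]
  rw [← IsLocalRing.residue_ne_zero_iff_isUnit]
  exact (hf.map ε).ne_zero

end MvPowerSeries

open MvPowerSeries

namespace FormalAnnulus

variable {R : Type*} [CommRing R] {c : R}

def eulerDeriv (c : R) : Derivation R (FormalAnnulus R c) (FormalAnnulus R c) :=
  Derivation.liftOfSurjective (Ideal.Quotient.mkₐ_surjective R (annulusIdeal c))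
    (d := annulusEuler R) fun f hf => by
      rw [Ideal.Quotient.mkₐ_eq_mk, Ideal.Quotient.eq_zero_iff_mem] at hf ⊢
      exact annulusEuler_mem_annulusIdeal hf

theorem eulerDeriv_mk (f : MvPowerSeries (Fin 2) R) :
    eulerDeriv c (Ideal.Quotient.mk (annulusIdeal c) f) =
      Ideal.Quotient.mk (annulusIdeal c) (annulusEuler R f) := by
  unfold eulerDeriv
  exact Derivation.liftOfSurjective_apply _ _ f

theorem eulerDeriv_mk_X_one :
    eulerDeriv c (Ideal.Quotient.mk (annulusIdeal c) (X 1)) =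
      Ideal.Quotient.mk (annulusIdeal c) (X 1) := by
  rw [eulerDeriv_mk, annulusEuler_X_one]

theorem sub_mem_annulusIdeal_of_smul_D_eq {n m : ℕ} {𝔡 : R} {A B : MvPowerSeries (Fin 2) R}
    {v : FormalAnnulus R c} (hv : v = Ideal.Quotient.mk (annulusIdeal c) (X 1))
    (h : v • KaehlerDifferential.D R (FormalAnnulus R c)
          (v ^ n * Ideal.Quotient.mk (annulusIdeal c) A) =
      (algebraMap R (FormalAnnulus R c) 𝔡 * v ^ m * Ideal.Quotient.mk (annulusIdeal c) B *
          (v ^ n * Ideal.Quotient.mk (annulusIdeal c) A)) •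
        KaehlerDifferential.D R (FormalAnnulus R c) v) :
    (C (n : R) * A + annulusEuler R A) * X 1 ^ (n + 1) - C 𝔡 * (B * A) * X 1 ^ (n + 1 + m) ∈
      annulusIdeal c := by
  subst hv
  have h' := congrArg (eulerDeriv c).liftKaehlerDifferential h
  simp only [map_smul, Derivation.liftKaehlerDifferential_comp_D] at h'
  simp only [Derivation.leibniz, (eulerDeriv c).apply_pow_of_apply_eq_self eulerDeriv_mk_X_one,
    eulerDeriv_mk, annulusEuler_X_one, smul_eq_mul, nsmul_eq_mul] at h'
  rw [← Ideal.Quotient.eq]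
  simp only [map_mul, map_add, map_pow, map_natCast, c_eq_algebraMap, Ideal.Quotient.mk_algebraMap]
  linear_combination h'

end FormalAnnulus

namespace IsDiscreteValuationRing

variable {R : Type*} [CommRing R] [IsDomain R] [IsDiscreteValuationRing R]

theorem le_addVal_of_pow_dvd {c x : R} (hc : ¬IsUnit c) {N : ℕ} (h : c ^ N ∣ x) :
    (N : ℕ∞) ≤ addVal R x := by
  have hc1 : 1 ≤ addVal R c := Order.one_le_iff_ne_zero.mpr (mt addVal_eq_zero_iff.mp hc)
  calc (N : ℕ∞) = N • 1 := by simp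
    _ ≤ N • addVal R c := nsmul_le_nsmul_right hc1 N
    _ = addVal R (c ^ N) := (addVal_pow c N).symm
    _ ≤ addVal R x := addVal_le_iff_dvd.mpr h

theorem addVal_eq_of_pow_dvd_sub {c x y : R} (hc : ¬IsUnit c) {N : ℕ} (h : c ^ N ∣ x - y)
    (hx : addVal R x < N) : addVal R y = addVal R x := by
  have hN := le_addVal_of_pow_dvd hc h
  have hy : min (addVal R x) (addVal R (x - y)) ≤ addVal R y := by
    simpa using (addVal R).map_sub x (x - y)
  have hx' : min (addVal R y) (addVal R (x - y)) ≤ addVal R x := by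
    simpa using addVal_add (a := y) (b := x - y)
  grind

theorem addVal_natCast (p : ℕ) [Fact p.Prime] [CharP (IsLocalRing.ResidueField R) p] {k : ℕ}
    (hk : k ≠ 0) : addVal R (k : R) = padicValNat p k • addVal R (p : R) := by
  have hdvd := pow_padicValNat_dvd (p := p) (n := k)
  have hndvd := pow_succ_padicValNat_not_dvd (p := p) hk
  generalize padicValNat p k = ν at hdvd hndvd ⊢
  obtain ⟨q, rfl⟩ := hdvd
  have hpq : ¬p ∣ q := fun h => hndvd (by rw [pow_succ]; exact mul_dvd_mul_left _ h)
  have hqu : IsUnit (q : R) := by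
    rw [← IsLocalRing.residue_ne_zero_iff_isUnit, map_natCast, Ne, CharP.cast_eq_zero_iff _ p]
    exact hpq
  rw [Nat.cast_mul, Nat.cast_pow, addVal_mul, addVal_pow, addVal_eq_zero_iff.mpr hqu, add_zero]

theorem padicValNat_lt_of_addVal_natCast_lt (p : ℕ) [Fact p.Prime]
    [CharP (IsLocalRing.ResidueField R) p] {a b : ℕ} (ha : a ≠ 0) (hb : b ≠ 0)
    (h : addVal R (a : R) < addVal R (b : R)) : padicValNat p a < padicValNat p b := by
  rw [addVal_natCast p ha, addVal_natCast p hb] at h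
  by_contra! hle
  exact h.not_ge (nsmul_le_nsmul_left bot_le hle)

end IsDiscreteValuationRing

theorem padicValNat_lt_of_padicValNat_add_lt {p a b : ℕ} [Fact p.Prime] (hb : b ≠ 0)
    (h : padicValNat p (a + b) < padicValNat p a) : padicValNat p b < padicValNat p a := by
  by_contra! hle
  exact h.not_ge ((padicValNat_dvd_iff_le (by omega)).mp
    (dvd_add pow_padicValNat_dvd ((padicValNat_dvd_iff_le hb).mpr hle)))

namespace MvPowerSeries

open IsDiscreteValuationRing

variable {R : Type*} [CommRing R] [IsDomain R] [IsDiscreteValuationRing R] {c 𝔡 : R} {n m : ℕ}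
  {A B : MvPowerSeries (Fin 2) R}

theorem addVal_add_le_addVal_natCast_of_mem (hc : ¬IsUnit c) (hA : IsUnit (constantCoeff A))
    (hn : (n : R) ≠ 0)
    (hmem : (C (n : R) * A + annulusEuler R A) * X 1 ^ (n + 1) - C 𝔡 * (B * A) * X 1 ^ (n + 1 + m)
      ∈ annulusIdeal c) :
    addVal R 𝔡 + m ≤ addVal R (n : R) := by
  obtain ⟨a, ha⟩ := ENat.ne_top_iff_exists.mp (mt addVal_eq_top_iff.mp hn)
  have hlhs := annulusCoeff_mul_X_one_pow (c := c) (N := a + 1) 0 (n + 1)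
    (C (n : R) * A + annulusEuler R A)
  rw [zero_add, annulusCoeff_C_mul_add_annulusEuler, Nat.cast_zero, add_zero] at hlhs
  obtain ⟨t, ht⟩ := pow_dvd_annulusCoeff_mul_X_one_pow (c := c) (N := a + 1) (n + 1) m (B * A)
  have hcong := pow_dvd_annulusCoeff_of_mem (N := a + 1) (n + 1) hmem
  rw [map_sub, mul_assoc, annulusCoeff_C_mul, hlhs, ht] at hcong
  have hunit := addVal_eq_zero_iff.mpr (isUnit_annulusCoeff_zero hc a hA)
  have hval := addVal_eq_of_pow_dvd_sub hc hcong (by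
    rw [addVal_mul, hunit, add_zero, ← ha]
    exact_mod_cast a.lt_succ_self)
  calc addVal R 𝔡 + m ≤ addVal R 𝔡 + addVal R (c ^ m * t) :=
        add_le_add_right (le_addVal_of_pow_dvd hc (dvd_mul_right _ _)) _
    _ = addVal R (n : R) := by rw [← addVal_mul, hval, addVal_mul, hunit, add_zero]

theorem addVal_natCast_add_le_addVal_of_mem (hc : ¬IsUnit c)
    (hBA : IsUnit (constantCoeff (B * A))) (h𝔡 : 𝔡 ≠ 0)
    (hmem : (C (n : R) * A + annulusEuler R A) * X 1 ^ (n + 1) - C 𝔡 * (B * A) * X 1 ^ (n + 1 + m)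
      ∈ annulusIdeal c) :
    addVal R ((n + m : ℕ) : R) ≤ addVal R 𝔡 := by
  obtain ⟨d, hd⟩ := ENat.ne_top_iff_exists.mp (mt addVal_eq_top_iff.mp h𝔡)
  have hlhs := annulusCoeff_mul_X_one_pow (c := c) (N := d + 1) m (n + 1)
    (C (n : R) * A + annulusEuler R A)
  rw [annulusCoeff_C_mul_add_annulusEuler, add_comm m] at hlhs
  have hrhs := annulusCoeff_mul_X_one_pow (c := c) (N := d + 1) 0 (n + 1 + m) (B * A)
  rw [zero_add] at hrhs
  have hcong := pow_dvd_annulusCoeff_of_mem (N := d + 1) (n + 1 + m) hmem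
  rw [map_sub, mul_assoc, annulusCoeff_C_mul, hlhs, hrhs, dvd_sub_comm] at hcong
  have hunit := addVal_eq_zero_iff.mpr (isUnit_annulusCoeff_zero hc d hBA)
  have hval := addVal_eq_of_pow_dvd_sub hc hcong (by
    rw [addVal_mul, hunit, add_zero, ← hd]
    exact_mod_cast d.lt_succ_self)
  calc addVal R ((n + m : ℕ) : R)
      ≤ addVal R ((n + m : ℕ) : R) + addVal R (annulusCoeff c (d + 1) m A) := le_self_add
    _ = addVal R 𝔡 := by rw [← addVal_mul, Nat.cast_add, hval, addVal_mul, hunit, add_zero]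

end MvPowerSeries

open MvPowerSeries IsDiscreteValuationRing in
theorem stmt7_general (p n m : ℕ) [Fact (Nat.Prime p)] (hn : 0 < n)
    (R : Type*) [CommRing R] [IsDomain R] [IsDiscreteValuationRing R]
    [CharZero R]
    (hres : CharP (IsLocalRing.ResidueField R) p)
    (c : R) (hcu : ¬ IsUnit c)
    (α β : (FormalAnnulus R c)ˣ) (𝔡 : R) (h𝔡 : 𝔡 ≠ 0)
    (v : FormalAnnulus R c)
    (hv : v = Ideal.Quotient.mk _ (MvPowerSeries.X 1))
    (y : FormalAnnulus R c) (hy : y = v ^ n * α)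
    (hδ : v • KaehlerDifferential.D R (FormalAnnulus R c) y =
      (algebraMap R (FormalAnnulus R c) 𝔡 * v ^ m * ↑β * y) •
        KaehlerDifferential.D R (FormalAnnulus R c) v) :
    (m ≠ 0 → padicValNat p m < padicValNat p n) ∧
    (m = 0 ↔ Ideal.span {𝔡} = Ideal.span {(n : R)}) := by
  obtain ⟨A, hA⟩ := Ideal.Quotient.mk_surjective (α : FormalAnnulus R c)
  obtain ⟨B, hB⟩ := Ideal.Quotient.mk_surjective (β : FormalAnnulus R c)
  rw [hy, ← hA, ← hB] at hδ
  have hmem := FormalAnnulus.sub_mem_annulusIdeal_of_smul_D_eq hv hδ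
  have hAu : IsUnit (constantCoeff A) := isUnit_constantCoeff_of_isUnit_mk hcu (hA ▸ α.isUnit)
  have hBAu : IsUnit (constantCoeff (B * A)) := isUnit_constantCoeff_of_isUnit_mk hcu
    (by rw [map_mul, hA, hB]; exact (β * α).isUnit)
  have hle₁ := addVal_add_le_addVal_natCast_of_mem hcu hAu (Nat.cast_ne_zero.mpr hn.ne') hmem
  have hle₂ := addVal_natCast_add_le_addVal_of_mem hcu hBAu h𝔡 hmem
  obtain ⟨d, hd⟩ := ENat.ne_top_iff_exists.mp (mt addVal_eq_top_iff.mp h𝔡)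
  rw [← hd] at hle₁ hle₂
  refine ⟨fun hm => ?_, fun hm => ?_, fun hspan => ?_⟩
  · have hlt : addVal R ((n + m : ℕ) : R) < addVal R (n : R) :=
      hle₂.trans_lt (lt_of_lt_of_le (mod_cast Nat.lt_add_of_pos_right (Nat.pos_of_ne_zero hm)) hle₁)
    have := hres
    exact padicValNat_lt_of_padicValNat_add_lt hm
      (padicValNat_lt_of_addVal_natCast_lt p (by omega) hn.ne' hlt)
  · subst hm
    rw [Ideal.span_singleton_eq_span_singleton, ← addVal_eq_iff_associated, ← hd]
    simp only [Nat.cast_zero, add_zero] at hle₁ hle₂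
    exact le_antisymm hle₁ hle₂
  · rw [Ideal.span_singleton_eq_span_singleton, ← addVal_eq_iff_associated, ← hd] at hspan
    rw [← hspan] at hle₁
    have : d + m ≤ d := mod_cast hle₁
    omega

/-- Unequal-characteristic half of the alternative (A).  Over a complete DVR
`R` of mixed characteristic `(0, p)`, with `y = v^n·α` (`α ∈ C^*`, `p ∣ n`) and
`dy/y = 𝔡·v^m·β·(dv/v)` (equivalently `v·dy = 𝔡·v^m·β·y·dv`), one has
`ν_p(m) < ν_p(n)` whenever `m ≠ 0`, and `m = 0` iff `(𝔡) = (n)` as ideals of `R`. -/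
theorem stmt7 (p n m : ℕ) [Fact (Nat.Prime p)] (hpn : p ∣ n) (hn : 0 < n)
    (R : Type*) [CommRing R] [IsDomain R] [IsDiscreteValuationRing R]
    [IsAdicComplete (IsLocalRing.maximalIdeal R) R] [CharZero R]
    (hres : CharP (IsLocalRing.ResidueField R) p)
    (c : R) (hc : c ≠ 0) (hcu : ¬ IsUnit c)
    (α β : (FormalAnnulus R c)ˣ) (𝔡 : R) (h𝔡 : 𝔡 ≠ 0)
    (v : FormalAnnulus R c)
    (hv : v = Ideal.Quotient.mk _ (MvPowerSeries.X 1))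
    (y : FormalAnnulus R c) (hy : y = v ^ n * α)
    (hδ : v • KaehlerDifferential.D R (FormalAnnulus R c) y =
      (algebraMap R (FormalAnnulus R c) 𝔡 * v ^ m * ↑β * y) •
        KaehlerDifferential.D R (FormalAnnulus R c) v) :
    (m ≠ 0 → padicValNat p m < padicValNat p n) ∧
    (m = 0 ↔ Ideal.span {𝔡} = Ideal.span {(n : R)}) :=
  stmt7_general p n m hn R hres c hcu α β 𝔡 h𝔡 v hv y hy hδ
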